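/- Let I be a monomial ideal generated in degree d, let k ≥ 1, and suppose for every 1 ≤ w ≤ k−1 and all a, b ∈ 𝒢(I^w) there is a path in G_{I^w}^{a,b} connecting a and b. Let u = u₁⋯u_k and v = v₁⋯v_k be minimal generators of I^k (u_i, v_j ∈ 𝒢(I)) lying in distinct connected components of G_{I^k}^{u,v}. Then u_i ≠ v_j for all i, j, i.e., the multisets {u₁,…,u_k} and {v₁,…,v_k} are disjoint as sets of generators. -/

import Mathlib

/-!
If `u = c·u'` and `v = c·v'` share the generator `c = uᵢ = vⱼ`, then `u'` and `v'` lie in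
`𝒢(I^{k-1})` and, by hypothesis, are joined by a path in `G_{I^{k-1}}^{u',v'}`. Multiplication by `c`
sends products of `k - 1` generators to products of `k` generators, all of which are minimal since
they have the same degree `dk`; as `lcm(ca, cb) = c·lcm(a, b)`, it also preserves divisibility of
`lcm(u', v')` and raises lcm degrees by `d`. So the path becomes a path from `u` to `v` in
`G_{I^k}^{u,v}`.
-/

open Finset

/-- A monomial in `n` variables, given by its exponent vector. -/
abbrev Mon (n : ℕ) := Fin n → ℕ

/-- Degree of a monomial. -/
def mdeg {n : ℕ} (u : Mon n) : ℕ := ∑ i, u i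

/-- Divisibility of monomials. -/
def mdvd {n : ℕ} (u v : Mon n) : Prop := ∀ i, u i ≤ v i

/-- Least common multiple of monomials. -/
def mlcm {n : ℕ} (u v : Mon n) : Mon n := fun i => max (u i) (v i)

/-- Products of `k` generators taken from `S`, i.e. the (not necessarily minimal)
monomial generators of `I^k` where `I` is generated by `S`.
(Products of monomials correspond to sums of exponent vectors.) -/
def powGen {n : ℕ} (S : Finset (Mon n)) (k : ℕ) : Set (Mon n) :=
  { m | ∃ f : Fin k → Mon n, (∀ i, f i ∈ S) ∧ m = ∑ i, f i }

/-- The minimal monomial generating set `𝒢(I^k)`. -/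
def minGen {n : ℕ} (S : Finset (Mon n)) (k : ℕ) : Set (Mon n) :=
  { m | m ∈ powGen S k ∧ ∀ m' ∈ powGen S k, mdvd m' m → m' = m }

/-- Adjacency in the graph `G_{I^k}^{u,v}`: both endpoints are minimal generators of `I^k`
dividing `lcm(u,v)`, and the degree of their lcm is `d·k + 1`. -/
def adj {n : ℕ} (S : Finset (Mon n)) (d k : ℕ) (u v a b : Mon n) : Prop :=
  a ∈ minGen S k ∧ b ∈ minGen S k ∧
    mdvd a (mlcm u v) ∧ mdvd b (mlcm u v) ∧ mdeg (mlcm a b) = d * k + 1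

/-- `a` and `b` are connected by a path in `G_{I^k}^{u,v}`. -/
def connectedIn {n : ℕ} (S : Finset (Mon n)) (d k : ℕ) (u v a b : Mon n) : Prop :=
  Relation.ReflTransGen (adj S d k u v) a b

lemma mdeg_add {n : ℕ} (a b : Mon n) : mdeg (a + b) = mdeg a + mdeg b := by
  simp [mdeg, Finset.sum_add_distrib]

lemma mdeg_sum {n k : ℕ} (f : Fin k → Mon n) : mdeg (∑ i, f i) = ∑ i, mdeg (f i) := by
  simp only [mdeg, Finset.sum_apply]
  exact Finset.sum_comm

lemma mdvd_add_left {n : ℕ} {a b : Mon n} (c : Mon n) (h : mdvd a b) : mdvd (c + a) (c + b) :=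
  fun t => Nat.add_le_add_left (h t) _

lemma mlcm_add_left {n : ℕ} (c a b : Mon n) : mlcm (c + a) (c + b) = c + mlcm a b := by
  funext t
  simp [mlcm]

lemma eq_of_mdvd_of_mdeg_eq {n : ℕ} {a b : Mon n} (hab : mdvd a b) (hdeg : mdeg a = mdeg b) :
    a = b :=
  funext fun t => (Finset.sum_eq_sum_iff_of_le fun i _ => hab i).mp hdeg t (Finset.mem_univ t)

lemma mdeg_of_mem_powGen {n k d : ℕ} {S : Finset (Mon n)} (hS : ∀ m ∈ S, mdeg m = d)
    {m : Mon n} (hm : m ∈ powGen S k) : mdeg m = d * k := by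
  obtain ⟨f, hf, rfl⟩ := hm
  simp [mdeg_sum, Finset.sum_congr rfl fun i _ => hS _ (hf i), mul_comm]

lemma mem_minGen_of_mem_powGen {n k d : ℕ} {S : Finset (Mon n)} (hS : ∀ m ∈ S, mdeg m = d)
    {m : Mon n} (hm : m ∈ powGen S k) : m ∈ minGen S k :=
  ⟨hm, fun _ hm' hdvd =>
    eq_of_mdvd_of_mdeg_eq hdvd (by rw [mdeg_of_mem_powGen hS hm, mdeg_of_mem_powGen hS hm'])⟩

lemma add_mem_powGen_succ {n k : ℕ} {S : Finset (Mon n)} {c a : Mon n}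
    (hc : c ∈ S) (ha : a ∈ powGen S k) : c + a ∈ powGen S (k + 1) := by
  obtain ⟨f, hf, rfl⟩ := ha
  refine ⟨Fin.cons c f, Fin.cases hc hf, ?_⟩
  simp [Fin.sum_univ_succ]

section MulGenerator

variable {n d k : ℕ} {S : Finset (Mon n)} {c : Mon n}

lemma adj_add_left (hS : ∀ m ∈ S, mdeg m = d) (hc : c ∈ S) {u v a b : Mon n}
    (h : adj S d k u v a b) : adj S d (k + 1) (c + u) (c + v) (c + a) (c + b) := by
  obtain ⟨ha, hb, hau, hbu, hdeg⟩ := h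
  refine ⟨mem_minGen_of_mem_powGen hS (add_mem_powGen_succ hc ha.1),
    mem_minGen_of_mem_powGen hS (add_mem_powGen_succ hc hb.1), ?_, ?_, ?_⟩
  · rw [mlcm_add_left]
    exact mdvd_add_left c hau
  · rw [mlcm_add_left]
    exact mdvd_add_left c hbu
  · rw [mlcm_add_left, mdeg_add, hdeg, hS c hc]
    ring

lemma connectedIn_add_left (hS : ∀ m ∈ S, mdeg m = d) (hc : c ∈ S) {u v a b : Mon n}
    (h : connectedIn S d k u v a b) :
    connectedIn S d (k + 1) (c + u) (c + v) (c + a) (c + b) :=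
  h.lift (c + ·) fun _ _ => adj_add_left hS hc

end MulGenerator

theorem stmt14_general {n k : ℕ} (d : ℕ) (S : Finset (Mon n))
    (hS : ∀ m ∈ S, mdeg m = d)
    (hind : ∀ w, 1 ≤ w → w ≤ k - 1 →
      ∀ a ∈ minGen S w, ∀ b ∈ minGen S w, connectedIn S d w a b a b)
    (u v : Mon n) (uu vv : Fin k → Mon n)
    (huS : ∀ i, uu i ∈ S) (hvS : ∀ i, vv i ∈ S)
    (hue : u = ∑ i, uu i) (hve : v = ∑ i, vv i)
    (hdisc : ¬ connectedIn S d k u v u v) :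
    ∀ i j, uu i ≠ vv j := by
  intro i j hij
  obtain ⟨w, rfl⟩ := Nat.exists_eq_add_one_of_ne_zero i.pos.ne'
  set u' := ∑ t : Fin w, uu (i.succAbove t)
  set v' := ∑ t : Fin w, vv (j.succAbove t)
  have hu : u = uu i + u' := by rw [hue, Fin.sum_univ_succAbove uu i]
  have hv : v = uu i + v' := by rw [hve, Fin.sum_univ_succAbove vv j, ← hij]
  have hconn : connectedIn S d w u' v' u' v' := by
    rcases Nat.eq_zero_or_pos w with rfl | hw
    · simp only [u', v', Finset.univ_eq_empty, Finset.sum_empty]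
      exact Relation.ReflTransGen.refl
    · exact hind w hw (by omega)
        u' (mem_minGen_of_mem_powGen hS ⟨_, fun t => huS _, rfl⟩)
        v' (mem_minGen_of_mem_powGen hS ⟨_, fun t => hvS _, rfl⟩)
  exact hdisc (hu ▸ hv ▸ connectedIn_add_left hS (huS i) hconn)

theorem stmt14 {n k : ℕ} (d : ℕ) (hk : 1 ≤ k) (S : Finset (Mon n))
    (hS : ∀ m ∈ S, mdeg m = d)
    (hind : ∀ w, 1 ≤ w → w ≤ k - 1 →
      ∀ a ∈ minGen S w, ∀ b ∈ minGen S w, connectedIn S d w a b a b)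
    (u v : Mon n) (uu vv : Fin k → Mon n)
    (huS : ∀ i, uu i ∈ S) (hvS : ∀ i, vv i ∈ S)
    (hue : u = ∑ i, uu i) (hve : v = ∑ i, vv i)
    (hum : u ∈ minGen S k) (hvm : v ∈ minGen S k)
    (hdisc : ¬ connectedIn S d k u v u v) :
    ∀ i j, uu i ≠ vv j :=
  stmt14_general d S hS hind u v uu vv huS hvS hue hve hdisc
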